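/- arXiv:2004.08525 — 2 statements merged into one kernel-verified Lean document; each statement's English description precedes it below -/
import Mathlib

section
/- Let K be a positive integer, let H : Fin K × Fin K → ℤ be nondecreasing in each argument (i.e. n₁ ≤ m₁ and n₂ ≤ m₂ imply H(n₁,n₂) ≤ H(m₁,m₂)), let f' : Fin K × Fin K → ℝ, and let t¹, t² : Fin K → Fin K → ℝ. Assume t¹ is lower triangular in the sense that t¹(n₁', n₁) = 0 whenever n₁ > n₁'. Define g(n₁, n₂') = Σ_{n₁' : H(n₁',n₂') ≤ 0} f'(n₁', n₂') · t¹(n₁', n₁), and define f(n₁, n₂) = Σ_{n₂' : H(n₁,n₂') ≤ 0} g(n₁, n₂') · t²(n₂', n₂). Then for every (n₁, n₂) ∈ Fin K × Fin K, f(n₁, n₂) = Σ_{(n₁',n₂') : H(n₁',n₂') ≤ 0} f'(n₁', n₂') · t¹(n₁', n₁) · t²(n₂', n₂). -/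
open Finset

/-- Two-dimensional fast matrix–vector multiplication for hierarchical bases:
a constrained double sum with a constraint function `H` nondecreasing in each
argument can be computed dimension by dimension when the transformation matrix
in the first dimension is lower triangular. -/
theorem fast_matvec_2d
    (K : ℕ) (hK : 0 < K)
    (H : Fin K × Fin K → ℤ)
    (hH : ∀ n₁ n₂ m₁ m₂ : Fin K, n₁ ≤ m₁ → n₂ ≤ m₂ → H (n₁, n₂) ≤ H (m₁, m₂))
    (f' : Fin K × Fin K → ℝ)
    (t₁ t₂ : Fin K → Fin K → ℝ)
    (htri : ∀ n₁' n₁ : Fin K, n₁' < n₁ → t₁ n₁' n₁ = 0)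
    (g : Fin K → Fin K → ℝ)
    (hg : ∀ n₁ n₂' : Fin K,
      g n₁ n₂' = ∑ n₁' ∈ univ.filter (fun n₁' : Fin K => H (n₁', n₂') ≤ 0),
        f' (n₁', n₂') * t₁ n₁' n₁)
    (f : Fin K → Fin K → ℝ)
    (hf : ∀ n₁ n₂ : Fin K,
      f n₁ n₂ = ∑ n₂' ∈ univ.filter (fun n₂' : Fin K => H (n₁, n₂') ≤ 0),
        g n₁ n₂' * t₂ n₂' n₂) :
    ∀ n₁ n₂ : Fin K,
      f n₁ n₂ = ∑ n' ∈ univ.filter (fun n' : Fin K × Fin K => H n' ≤ 0),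
        f' n' * t₁ n'.1 n₁ * t₂ n'.2 n₂ := by
  intro n₁ n₂
  rw [hf]
  simp_rw [hg, Finset.sum_mul]
  simp_rw [Finset.sum_filter]
  have hrhs : (∑ n' : Fin K × Fin K,
      if H n' ≤ 0 then f' n' * t₁ n'.1 n₁ * t₂ n'.2 n₂ else 0)
      = ∑ n₂' : Fin K, ∑ n₁' : Fin K,
        if H (n₁', n₂') ≤ 0 then f' (n₁', n₂') * t₁ n₁' n₁ * t₂ n₂' n₂ else 0 := by
    rw [← Finset.univ_product_univ, Finset.sum_product_right]
  rw [hrhs]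
  refine Finset.sum_congr rfl fun n₂' _ => ?_
  by_cases h : H (n₁, n₂') ≤ 0
  · simp [h]
  · simp only [h, if_false]
    refine (Finset.sum_eq_zero fun n₁' _ => ?_).symm
    by_cases h' : H (n₁', n₂') ≤ 0
    · simp only [h', if_true]
      have : ¬ n₁ ≤ n₁' := fun hle => h ((hH n₁ n₂' n₁' n₂' hle le_rfl).trans h')
      rw [htri n₁' n₁ (lt_of_not_ge this)]
      ring
    · simp [h']
end

section
/- Let V be a finite-dimensional real inner product space and let B : V → V → ℝ be a symmetric bilinear form that is positive semidefinite (B(v, v) ≥ 0 for all v ∈ V). Suppose u : ℝ → V is twice differentiable and satisfies ⟨u''(t), v⟩ + B(u(t), v) = 0 for every t ∈ ℝ and every v ∈ V. Then for every t ∈ ℝ, ‖u'(t)‖² ≤ ‖u'(0)‖² + B(u(0), u(0)) and B(u(t), u(t)) ≤ ‖u'(0)‖² + B(u(0), u(0)). -/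
/-!
Testing the equation against `v = u'(t)` and using the symmetry of `B`, the energy
`‖u'(t)‖² + B(u(t), u(t))` has derivative `2 (⟪u'', u'⟫ + B(u, u')) = 0`, so it is constant.
Both of its summands are nonnegative, hence each is bounded by the initial energy.
-/

open InnerProductSpace

theorem HasDerivAt.bilin_apply_self_of_symm {E : Type*} [NormedAddCommGroup E] [NormedSpace ℝ E]
    (B : E →L[ℝ] E →L[ℝ] ℝ) (hB : ∀ x y, B x y = B y x) {u : ℝ → E} {u' : E} {t : ℝ}
    (hu : HasDerivAt u u' t) :
    HasDerivAt (fun s => B (u s) (u s)) (2 * B (u t) u') t := by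
  refine ((B.hasFDerivAt.comp_hasDerivAt t hu).clm_apply hu).congr_deriv ?_
  rw [Function.comp_apply, hB u', two_mul]

section WaveEnergy

variable {V : Type*} [NormedAddCommGroup V] [InnerProductSpace ℝ V]

/-- Twice the energy of the semi-discrete wave equation `u'' + B u = 0`. -/
noncomputable def waveEnergy (B : V →L[ℝ] V →L[ℝ] ℝ) (u u' : ℝ → V) (t : ℝ) : ℝ :=
  ‖u' t‖ ^ 2 + B (u t) (u t)

variable {B : V →L[ℝ] V →L[ℝ] ℝ} {u u' u'' : ℝ → V}

theorem hasDerivAt_waveEnergy (hB : ∀ x y, B x y = B y x)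
    (hu : ∀ t, HasDerivAt u (u' t) t) (hu' : ∀ t, HasDerivAt u' (u'' t) t)
    (heq : ∀ t v, ⟪u'' t, v⟫_ℝ + B (u t) v = 0) (t : ℝ) :
    HasDerivAt (waveEnergy B u u') 0 t := by
  refine ((hu' t).norm_sq.add ((hu t).bilin_apply_self_of_symm B hB)).congr_deriv ?_
  rw [real_inner_comm, ← mul_add, heq, mul_zero]

theorem waveEnergy_eq_initial (hB : ∀ x y, B x y = B y x)
    (hu : ∀ t, HasDerivAt u (u' t) t) (hu' : ∀ t, HasDerivAt u' (u'' t) t)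
    (heq : ∀ t v, ⟪u'' t, v⟫_ℝ + B (u t) v = 0) (t : ℝ) :
    waveEnergy B u u' t = waveEnergy B u u' 0 :=
  have hE := hasDerivAt_waveEnergy hB hu hu' heq
  is_const_of_deriv_eq_zero (fun s => (hE s).differentiableAt) (fun s => (hE s).deriv) t 0

end WaveEnergy

/-- Stability consequence of energy conservation: for a symmetric positive
semidefinite bilinear form `B`, both the kinetic part `‖u'(t)‖²` and the
elastic part `B(u(t),u(t))` are bounded by twice the initial energy. -/
theorem energy_stability_bounds
    {V : Type*} [NormedAddCommGroup V] [InnerProductSpace ℝ V] [FiniteDimensional ℝ V]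
    (B : V →ₗ[ℝ] V →ₗ[ℝ] ℝ) (hB : ∀ x y : V, B x y = B y x)
    (hpos : ∀ v : V, 0 ≤ B v v)
    (u u' u'' : ℝ → V)
    (hu : ∀ t : ℝ, HasDerivAt u (u' t) t)
    (hu' : ∀ t : ℝ, HasDerivAt u' (u'' t) t)
    (heq : ∀ t : ℝ, ∀ v : V, ⟪u'' t, v⟫_ℝ + B (u t) v = 0) :
    ∀ t : ℝ,
      ‖u' t‖^2 ≤ ‖u' 0‖^2 + B (u 0) (u 0) ∧
      B (u t) (u t) ≤ ‖u' 0‖^2 + B (u 0) (u 0) := by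
  intro t
  have hE : ‖u' t‖ ^ 2 + B (u t) (u t) = ‖u' 0‖ ^ 2 + B (u 0) (u 0) :=
    waveEnergy_eq_initial (B := B.toContinuousBilinearMap) hB hu hu' heq t
  exact ⟨by linarith [hpos (u t)], by linarith [sq_nonneg ‖u' t‖]⟩
end
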